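/- arXiv:1505.02310 — 3 statements merged into one kernel-verified Lean document; each statement's English description precedes it below -/
import Mathlib

section
/- Substituting f(x) = 1/(1+θx^α) into the PGFL formula G_R[f] = 1/(1 + 2∫_0^1(1-f(x))x^{-3}dx) yields the PPP success probability p_s(θ) = 1/₂F₁(1,-δ;1-δ;-θ) where δ = 2/α; equivalently, 2∫_0^1 (θx^α/(1+θx^α)) x^{-3} dx = ₂F₁(1,-δ;1-δ;-θ) - 1. -/
open MeasureTheory intervalIntegral

/-- The Gauss hypergeometric value ₂F₁(1, -δ; 1-δ; -θ) for 0 < δ < 1, θ ≥ 0,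
via the identity ₂F₁(1,-δ;1-δ;-θ) = 1 + (δθ/(1-δ))·₂F₁(1,1-δ;2-δ;-θ) and the Euler
integral representation ₂F₁(1,1-δ;2-δ;-θ) = (1-δ)∫_0^1 t^{-δ}/(1+θt) dt. -/
noncomputable def twoF1 (δ θ : ℝ) : ℝ :=
  1 + δ * θ * ∫ t in (0 : ℝ)..1, t ^ (-δ) / (1 + θ * t)

/-! With δ = 2/α the substitution t = x^α turns x^{α-3} dx into t^{-δ} dt / α, so
2∫_0^1 θx^α/(1+θx^α) x⁻³ dx = δθ ∫_0^1 t^{-δ}/(1+θt) dt, which is the Euler-integral form of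
₂F₁(1,-δ;1-δ;-θ) - 1 used to define `twoF1`. The second identity follows from
1 - 1/(1+θx^α) = θx^α/(1+θx^α). -/

open Set Real

theorem intervalIntegral_comp_rpow_of_pos {E : Type*} [NormedAddCommGroup E] [NormedSpace ℝ E]
    {g : ℝ → E} {p b : ℝ} (hp : 0 < p) (hb : 0 ≤ b) :
    ∫ x in (0 : ℝ)..b, (p * x ^ (p - 1)) • g (x ^ p) = ∫ y in (0 : ℝ)..b ^ p, g y := by
  -- Extending by zero past `b` reduces this to the substitution on `(0, ∞)`, which needs no
  -- integrability hypothesis.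
  have toIoi : ∀ (f : ℝ → E) (c : ℝ), 0 ≤ c →
      ∫ y in (0 : ℝ)..c, f y = ∫ y in Ioi 0, (Iic c).indicator f y := by
    intro f c hc
    rw [integral_of_le hc, setIntegral_indicator measurableSet_Iic, Ioi_inter_Iic]
  rw [toIoi _ b hb, toIoi _ (b ^ p) (by positivity),
    ← integral_comp_rpow_Ioi_of_pos (g := (Iic (b ^ p)).indicator g) hp]
  refine setIntegral_congr_fun measurableSet_Ioi fun x hx => ?_
  simp only [indicator_apply, mem_Iic, rpow_le_rpow_iff (le_of_lt hx) hb hp]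
  split_ifs <;> simp

theorem integral_mul_rpow_div_one_add_mul_rpow {α : ℝ} (hα : 0 < α) (θ : ℝ) :
    ∫ x in (0 : ℝ)..1, (θ * x ^ α / (1 + θ * x ^ α)) * x ^ (-3 : ℝ)
      = θ / α * ∫ t in (0 : ℝ)..1, t ^ (-(2 / α)) / (1 + θ * t) := by
  have hpointwise : ∀ x ∈ uIoc (0 : ℝ) 1, (θ * x ^ α / (1 + θ * x ^ α)) * x ^ (-3 : ℝ)
      = θ / α * ((α * x ^ (α - 1)) • ((x ^ α) ^ (-(2 / α)) / (1 + θ * x ^ α))) := by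
    intro x hx
    have hx0 : 0 < x := by simpa using hx.1
    have hsubst : (x ^ α) ^ (-(2 / α)) = x ^ (-2 : ℝ) := by
      rw [← rpow_mul hx0.le]
      field_simp
    have hexp : x ^ α * x ^ (-3 : ℝ) = x ^ (α - 1) * x ^ (-2 : ℝ) := by
      rw [← rpow_add hx0, ← rpow_add hx0]
      ring_nf
    rw [hsubst, smul_eq_mul]
    field_simp
    linear_combination θ * (1 + θ * x ^ α)⁻¹ * hexp
  rw [integral_congr_ae (ae_of_all _ hpointwise), intervalIntegral.integral_const_mul,
    intervalIntegral_comp_rpow_of_pos (g := fun t => t ^ (-(2 / α)) / (1 + θ * t)) hα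
      zero_le_one, one_rpow]

/-- Substituting f(x) = 1/(1+θx^α) into the PGFL of the relative distance process of the
PPP yields the success probability p_s(θ) = 1/₂F₁(1,-δ;1-δ;-θ), δ = 2/α; equivalently
2∫_0^1 (θx^α/(1+θx^α)) x⁻³ dx = ₂F₁(1,-δ;1-δ;-θ) - 1. -/
theorem stmt5 (α δ θ : ℝ) (hα : 2 < α) (hδ : δ = 2 / α) (hθ : 0 ≤ θ) :
    (2 * ∫ x in (0 : ℝ)..1, (θ * x ^ α / (1 + θ * x ^ α)) * x ^ (-3 : ℝ)
        = twoF1 δ θ - 1)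
    ∧ 1 / (1 + 2 * ∫ x in (0 : ℝ)..1, (1 - 1 / (1 + θ * x ^ α)) * x ^ (-3 : ℝ))
        = 1 / twoF1 δ θ := by
  have hα0 : 0 < α := by linarith
  have hintegral : 2 * ∫ x in (0 : ℝ)..1, (θ * x ^ α / (1 + θ * x ^ α)) * x ^ (-3 : ℝ)
      = twoF1 δ θ - 1 := by
    rw [integral_mul_rpow_div_one_add_mul_rpow hα0, twoF1, hδ]
    field_simp
    ring
  refine ⟨hintegral, ?_⟩
  have hintegrand : ∀ x ∈ uIcc (0 : ℝ) 1, (1 - 1 / (1 + θ * x ^ α)) * x ^ (-3 : ℝ)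
      = (θ * x ^ α / (1 + θ * x ^ α)) * x ^ (-3 : ℝ) := by
    intro x hx
    have hx0 : 0 ≤ x := by simpa using hx.1
    have hden : 0 < 1 + θ * x ^ α := by positivity
    rw [one_sub_div hden.ne', add_sub_cancel_left]
  rw [intervalIntegral.integral_congr hintegrand, hintegral, add_sub_cancel]
end

section
/- For n ≥ 2, the generalized MISR of the PPP is lower bounded by MISR_n ≥ [(δ/(1-δ))^n n! + δE(h^n)/(n-δ)]^{1/n}, with equality for n = 2. -/
/-!
With nonnegative arguments every term `k! B_{n,k}` of the sum is nonnegative, and the terms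
`k = 1` and `k = n` are `B_{n,1} = x_n` and `n! B_{n,n} = n! x_1^n`; for `n = 2` they are
the only terms.
-/

open Finset

/-- Partial Bell polynomials `B_{n,k}(x_1, x_2, …)`. -/
noncomputable def Bell (x : ℕ → ℝ) : ℕ → ℕ → ℝ
  | 0, 0 => 1
  | 0, _ + 1 => 0
  | _ + 1, 0 => 0
  | n + 1, k + 1 =>
      ∑ i ∈ Finset.range (n + 1), (n.choose i : ℝ) * x (i + 1) * Bell x (n - i) k
  termination_by n _ => n
  decreasing_by simp_wf <;> omega

namespace Bell

variable (x : ℕ → ℝ)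

@[simp] theorem zero_zero : Bell x 0 0 = 1 := by rw [Bell]

@[simp] theorem succ_zero (n : ℕ) : Bell x (n + 1) 0 = 0 := by rw [Bell]

theorem succ_succ (n k : ℕ) :
    Bell x (n + 1) (k + 1) =
      ∑ i ∈ range (n + 1), (n.choose i : ℝ) * x (i + 1) * Bell x (n - i) k := by
  rw [Bell]

theorem eq_zero_of_lt {n k : ℕ} (h : n < k) : Bell x n k = 0 := by
  induction n using Nat.strong_induction_on generalizing k with
  | _ n ih =>
    obtain ⟨k, rfl⟩ : ∃ k', k = k' + 1 := Nat.exists_eq_add_one.mpr (by omega)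
    cases n with
    | zero => rw [Bell]
    | succ n =>
      rw [succ_succ]
      refine sum_eq_zero fun i _ => ?_
      rw [ih (n - i) (by omega) (by omega), mul_zero]

theorem nonneg {x : ℕ → ℝ} (hx : ∀ j, 1 ≤ j → 0 ≤ x j) (n k : ℕ) : 0 ≤ Bell x n k := by
  induction n using Nat.strong_induction_on generalizing k with
  | _ n ih =>
    match n, k with
    | 0, 0 => simp
    | 0, _ + 1 => exact (eq_zero_of_lt x (Nat.succ_pos _)).ge
    | _ + 1, 0 => simp
    | n + 1, k + 1 =>
      rw [succ_succ]
      exact sum_nonneg fun i _ =>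
        mul_nonneg (mul_nonneg (Nat.cast_nonneg _) (hx _ (by omega))) (ih _ (by omega) _)

theorem one {n : ℕ} (hn : 1 ≤ n) : Bell x n 1 = x n := by
  obtain ⟨n, rfl⟩ := Nat.exists_eq_add_of_le' hn
  rw [succ_succ, sum_eq_single_of_mem n (self_mem_range_succ n)]
  · simp
  · intro i hi hin
    obtain ⟨m, hm⟩ : ∃ m, n - i = m + 1 :=
      Nat.exists_eq_add_one.mpr (by have := mem_range.mp hi; omega)
    rw [hm, succ_zero, mul_zero]

theorem self (n : ℕ) : Bell x n n = x 1 ^ n := by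
  induction n with
  | zero => simp
  | succ n ih =>
    rw [succ_succ, sum_eq_single_of_mem 0 (by simp)]
    · simp [ih, pow_succ, mul_comm]
    · intro i hi hi0
      rw [eq_zero_of_lt x (by have := mem_range.mp hi; omega), mul_zero]

end Bell

theorem sum_factorial_mul_Bell_one_self (x : ℕ → ℝ) {n : ℕ} (hn : 2 ≤ n) :
    ∑ k ∈ {1, n}, (k.factorial : ℝ) * Bell x n k = x n + n.factorial * x 1 ^ n := by
  rw [sum_pair (by omega), Bell.one x (by omega), Bell.self]
  simp

theorem add_le_sum_factorial_mul_Bell {x : ℕ → ℝ} (hx : ∀ j, 1 ≤ j → 0 ≤ x j) {n : ℕ}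
    (hn : 2 ≤ n) :
    x n + n.factorial * x 1 ^ n ≤ ∑ k ∈ Icc 1 n, (k.factorial : ℝ) * Bell x n k := by
  rw [← sum_factorial_mul_Bell_one_self x hn]
  have hsub : ({1, n} : Finset ℕ) ⊆ Icc 1 n :=
    insert_subset_iff.mpr ⟨mem_Icc.mpr ⟨le_rfl, by omega⟩,
      singleton_subset_iff.mpr (mem_Icc.mpr ⟨by omega, le_rfl⟩)⟩
  exact sum_le_sum_of_subset_of_nonneg hsub fun k _ _ =>
    mul_nonneg (Nat.cast_nonneg _) (Bell.nonneg hx n k)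

theorem sum_factorial_mul_Bell_two (x : ℕ → ℝ) :
    ∑ k ∈ Icc 1 2, (k.factorial : ℝ) * Bell x 2 k = x 2 + 2 * x 1 ^ 2 := by
  rw [show Icc 1 2 = {1, 2} from rfl, sum_factorial_mul_Bell_one_self x le_rfl]
  norm_num

theorem mul_div_sub_nonneg {δ : ℝ} (hδ : δ ∈ Set.Icc (0 : ℝ) 1) {μ : ℕ → ℝ} (hμ : ∀ j, 0 ≤ μ j)
    {j : ℕ} (hj : 1 ≤ j) : 0 ≤ δ * μ j / ((j : ℝ) - δ) := by
  have : (1 : ℝ) ≤ j := by exact_mod_cast hj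
  exact div_nonneg (mul_nonneg hδ.1 (hμ j)) (by linarith [hδ.2])

/-- For the PPP with fading moments μ_j = E(h^j) (μ₁ = 1), the generalized MISR
MISR_n = (E(ISR^n))^{1/n} with E(ISR^n) = ∑_{k=1}^n k! B_{n,k}(δμ₁/(1-δ),…) is lower
bounded, for n ≥ 2, by [(δ/(1-δ))^n n! + δ E(h^n)/(n-δ)]^{1/n}, keeping only the k = n
and k = 1 terms; for n = 2 the bound holds with equality. -/
theorem stmt11 (δ : ℝ) (hδ : δ ∈ Set.Ioo (0 : ℝ) 1)
    (μ : ℕ → ℝ) (hμ : ∀ j, 0 ≤ μ j) (hμ1 : μ 1 = 1)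
    (S : ℕ → ℝ)
    (hS : ∀ n, S n = ∑ k ∈ Finset.Icc 1 n, (k.factorial : ℝ) *
        Bell (fun j => δ * μ j / ((j : ℝ) - δ)) n k)
    (n : ℕ) (hn : 2 ≤ n) :
    (S n) ^ ((1 : ℝ) / n) ≥
      ((δ / (1 - δ)) ^ n * n.factorial + δ * μ n / ((n : ℝ) - δ)) ^ ((1 : ℝ) / n)
    ∧ S 2 = (δ / (1 - δ)) ^ 2 * Nat.factorial 2 + δ * μ 2 / (2 - δ) := by
  set x : ℕ → ℝ := fun j => δ * μ j / ((j : ℝ) - δ)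
  have hx : ∀ j, 1 ≤ j → 0 ≤ x j := fun j => mul_div_sub_nonneg (Set.Ioo_subset_Icc_self hδ) hμ
  have hx1 : x 1 = δ / (1 - δ) := by simp [x, hμ1]
  constructor
  · refine Real.rpow_le_rpow ?_ ?_ (by positivity)
    · have : 0 ≤ δ / (1 - δ) := by rw [← hx1]; exact hx 1 le_rfl
      exact add_nonneg (by positivity) (hx n (by omega))
    · rw [hS n, ← hx1]
      linarith [add_le_sum_factorial_mul_Bell hx hn]
  · rw [hS 2, sum_factorial_mul_Bell_two, hx1]
    simp only [x, Nat.factorial_two, Nat.cast_ofNat]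
    ring
end

section
/- For any simple stationary point process with intensity λ whose nearest-point distance R satisfies P(R < x) ~ λπx² as x → 0, and fading h ≥ 0 with E(h^δ) < ∞ independent of R, the received signal power S = hR^{-α} has tail P(S > θ) ~ λπE(h^δ)θ^{-δ} as θ → ∞, where δ = 2/α. -/
open MeasureTheory ProbabilityTheory Real Filter Set Topology

/-! Conditioning on `h`, independence gives `P(S > θ) = E[F((h/θ)^{1/α})]` with `F` the
distribution function of `R`. Writing `y = (h/θ)^{1/α}`, so that `y² = h^δ θ^{-δ}`, the
rescaled integrand is `θ^δ F(y) = h^δ · F(y)/y²`: it tends to `λπ h^δ` because `y → 0⁺`, and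
it is dominated by `C h^δ`, which is integrable. Dominated convergence concludes. -/

lemma lt_mul_rpow_neg_iff {θ a r α : ℝ} (hθ : 0 < θ) (ha : 0 ≤ a) (hr : 0 < r) (hα : 0 < α) :
    θ < a * r ^ (-α) ↔ r < (a / θ) ^ α⁻¹ := by
  rw [lt_rpow_inv_iff_of_pos hr.le (div_nonneg ha hθ.le) hα, rpow_neg hr.le, ← div_eq_mul_inv,
    lt_div_iff₀ (rpow_pos_of_pos hr α), lt_div_iff₀ hθ, mul_comm]

lemma rpow_inv_sq {y : ℝ} (hy : 0 ≤ y) (α : ℝ) : (y ^ α⁻¹) ^ 2 = y ^ (2 / α) := by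
  rw [← rpow_mul_natCast hy, inv_mul_eq_div, Nat.cast_ofNat]

lemma rpow_mul_eq_mul_div_sq {x θ : ℝ} (hx : 0 < x) (hθ : 0 < θ) (α a : ℝ) :
    θ ^ (2 / α) * a = x ^ (2 / α) * (a / ((x / θ) ^ α⁻¹) ^ 2) := by
  rw [rpow_inv_sq (div_pos hx hθ).le, div_rpow hx.le hθ.le]
  have hxp : 0 < x ^ (2 / α) := rpow_pos_of_pos hx _
  have hθp : 0 < θ ^ (2 / α) := rpow_pos_of_pos hθ _
  field_simp

lemma tendsto_div_rpow_inv_atTop {x α : ℝ} (hx : 0 < x) (hα : 0 < α) :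
    Tendsto (fun θ : ℝ => (x / θ) ^ α⁻¹) atTop (𝓝[>] 0) := by
  refine tendsto_nhdsWithin_iff.2 ⟨?_, ?_⟩
  · have hcont := continuousAt_rpow_const 0 α⁻¹ (Or.inr (inv_nonneg.2 hα.le))
    simpa [Function.comp_def, zero_rpow (inv_ne_zero hα.ne')] using
      hcont.tendsto.comp (tendsto_const_nhds.div_atTop tendsto_id)
  · filter_upwards [eventually_gt_atTop 0] with θ hθ
    exact rpow_pos_of_pos (div_pos hx hθ) _

section ScaledTail

variable {F : ℝ → ℝ} {α x : ℝ}

lemma rpow_mul_comp_div_rpow_inv_le {C θ : ℝ} (hF0 : F 0 = 0)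
    (hFC : ∀ y, 0 < y → F y ≤ C * y ^ 2) (hx : 0 ≤ x) (hθ : 0 < θ) (hα : 0 < α) :
    θ ^ (2 / α) * F ((x / θ) ^ α⁻¹) ≤ C * x ^ (2 / α) := by
  rcases hx.eq_or_lt with rfl | hxpos
  · simp [zero_rpow (inv_ne_zero hα.ne'), zero_rpow (div_ne_zero two_ne_zero hα.ne'), hF0]
  have hy : 0 < (x / θ) ^ α⁻¹ := rpow_pos_of_pos (div_pos hxpos hθ) _
  rw [rpow_mul_eq_mul_div_sq hxpos hθ, mul_comm C]
  exact mul_le_mul_of_nonneg_left ((div_le_iff₀ (by positivity)).2 (hFC _ hy))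
    (rpow_nonneg hxpos.le _)

lemma tendsto_rpow_mul_comp_div_rpow_inv {c : ℝ} (hF0 : F 0 = 0)
    (hF : Tendsto (fun y => F y / y ^ 2) (𝓝[>] 0) (𝓝 c)) (hx : 0 ≤ x) (hα : 0 < α) :
    Tendsto (fun θ : ℝ => θ ^ (2 / α) * F ((x / θ) ^ α⁻¹)) atTop (𝓝 (c * x ^ (2 / α))) := by
  rcases hx.eq_or_lt with rfl | hxpos
  · simp [zero_rpow (inv_ne_zero hα.ne'), zero_rpow (div_ne_zero two_ne_zero hα.ne'), hF0]
  rw [mul_comm c]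
  refine ((hF.comp (tendsto_div_rpow_inv_atTop hxpos hα)).const_mul _).congr' ?_
  filter_upwards [eventually_gt_atTop 0] with θ hθ
  exact (rpow_mul_eq_mul_div_sq hxpos hθ α _).symm

end ScaledTail

lemma toReal_measure_lt_comp_eq_integral {Ω : Type*} [MeasurableSpace Ω] {μ : Measure Ω}
    [IsFiniteMeasure μ] {X Y : Ω → ℝ} (hX : Measurable X) (hY : Measurable Y)
    (hXY : IndepFun X Y μ) {g : ℝ → ℝ} (hg : Measurable g) :
    (μ {ω | Y ω < g (X ω)}).toReal = ∫ ω, (μ {ω' | Y ω' < g (X ω)}).toReal ∂μ := by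
  have hS : MeasurableSet {p : ℝ × ℝ | p.2 < g p.1} :=
    measurableSet_lt measurable_snd (hg.comp measurable_fst)
  have hcdf : Measurable fun c : ℝ => μ {ω | Y ω < c} :=
    Monotone.measurable fun a b hab => measure_mono fun ω (hω : Y ω < a) => hω.trans_le hab
  have hlintegral : μ {ω | Y ω < g (X ω)} = ∫⁻ ω, μ {ω' | Y ω' < g (X ω)} ∂μ :=
    calc μ {ω | Y ω < g (X ω)} = μ.map (fun ω => (X ω, Y ω)) {p | p.2 < g p.1} :=
          (Measure.map_apply (hX.prodMk hY) hS).symm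
      _ = (μ.map X).prod (μ.map Y) {p | p.2 < g p.1} := by
          rw [(indepFun_iff_map_prod_eq_prod_map_map hX.aemeasurable hY.aemeasurable).1 hXY]
      _ = ∫⁻ x, μ.map Y (Iio (g x)) ∂(μ.map X) := Measure.prod_apply hS
      _ = ∫⁻ x, μ {ω | Y ω < g x} ∂(μ.map X) := by
          simp_rw [Measure.map_apply hY measurableSet_Iio]; rfl
      _ = ∫⁻ ω, μ {ω' | Y ω' < g (X ω)} ∂μ := lintegral_map (hcdf.comp hg) hX
  rw [hlintegral]
  exact (integral_toReal (hcdf.comp (hg.comp hX)).aemeasurable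
    (ae_of_all _ fun _ => measure_lt_top _ _)).symm

lemma tendsto_rpow_mul_integral_comp_div_rpow_inv {Ω : Type*} [MeasurableSpace Ω]
    {μ : Measure Ω} {F : ℝ → ℝ} {X : Ω → ℝ} {α c C : ℝ} (hα : 0 < α) (hFm : Measurable F)
    (hFnn : ∀ y, 0 ≤ F y) (hF0 : F 0 = 0) (hFC : ∀ y, 0 < y → F y ≤ C * y ^ 2)
    (hF : Tendsto (fun y => F y / y ^ 2) (𝓝[>] 0) (𝓝 c)) (hXm : Measurable X)
    (hX : ∀ ω, 0 ≤ X ω) (hXint : Integrable (fun ω => X ω ^ (2 / α)) μ) :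
    Tendsto (fun θ : ℝ => θ ^ (2 / α) * ∫ ω, F ((X ω / θ) ^ α⁻¹) ∂μ) atTop
      (𝓝 (c * ∫ ω, X ω ^ (2 / α) ∂μ)) := by
  simp_rw [← integral_const_mul]
  refine tendsto_integral_filter_of_dominated_convergence (fun ω => C * X ω ^ (2 / α))
    (Eventually.of_forall fun θ => ?_) ?_ (hXint.const_mul C)
    (ae_of_all _ fun ω => tendsto_rpow_mul_comp_div_rpow_inv hF0 hF (hX ω) hα)
  · exact (hFm.comp ((hXm.div_const θ).pow_const α⁻¹)).const_mul _ |>.aestronglyMeasurable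
  · filter_upwards [eventually_gt_atTop 0] with θ hθ
    refine ae_of_all _ fun ω => ?_
    rw [norm_of_nonneg (mul_nonneg (rpow_nonneg hθ.le _) (hFnn _))]
    exact rpow_mul_comp_div_rpow_inv_le hF0 hFC (hX ω) hθ hα

/-- For a simple stationary point process of intensity λ whose nearest-point distance R
satisfies P(R < x) ~ λπx² as x → 0⁺ (with the global bound P(R < x) ≤ Cx²), and
independent fading h ≥ 0 with E(h^δ) < ∞, the received signal power S = hR^{-α} has
tail P(S > θ) ~ λπ E(h^δ) θ^{-δ} as θ → ∞, where δ = 2/α. -/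
theorem stmt18
    {Ω : Type*} [MeasureSpace Ω] [IsProbabilityMeasure (ℙ : Measure Ω)]
    (lam α δ : ℝ) (hlam : 0 < lam) (hα : 2 < α) (hδ : δ = 2 / α)
    (R h : Ω → ℝ) (hRmeas : Measurable R) (hhmeas : Measurable h)
    (hRpos : ∀ ω, 0 < R ω) (hhnn : ∀ ω, 0 ≤ h ω)
    (hindep : IndepFun h R (ℙ : Measure Ω))
    (hhint : Integrable (fun ω => h ω ^ δ) (ℙ : Measure Ω))
    (htail : Tendsto (fun x : ℝ => (ℙ {ω | R ω < x}).toReal / (lam * π * x ^ 2))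
        (nhdsWithin 0 (Ioi 0)) (nhds 1))
    (C : ℝ) (hbound : ∀ x : ℝ, 0 < x → (ℙ {ω | R ω < x}).toReal ≤ C * x ^ 2) :
    Tendsto (fun θ : ℝ => θ ^ δ * (ℙ {ω | θ < h ω * R ω ^ (-α)}).toReal)
      atTop (nhds (lam * π * ∫ ω, h ω ^ δ)) := by
  have hα₀ : 0 < α := by linarith
  subst hδ
  set F : ℝ → ℝ := fun c => (ℙ {ω | R ω < c}).toReal
  have hFmono : Monotone F := fun a b hab =>
    ENNReal.toReal_mono (measure_ne_top _ _) (measure_mono fun ω (hω : R ω < a) => hω.trans_le hab)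
  have hF0 : F 0 = 0 := by simp [F, fun ω => (hRpos ω).not_gt]
  have hFlim : Tendsto (fun y => F y / y ^ 2) (𝓝[>] 0) (𝓝 (lam * π)) := by
    have hc : lam * π ≠ 0 := by positivity
    simpa [mul_div_assoc', mul_div_mul_left _ _ hc] using htail.const_mul (lam * π)
  have hprob : ∀ θ, 0 < θ → (ℙ {ω | θ < h ω * R ω ^ (-α)}).toReal =
      ∫ ω, F ((h ω / θ) ^ α⁻¹) := by
    intro θ hθ
    simp_rw [lt_mul_rpow_neg_iff hθ (hhnn _) (hRpos _) hα₀]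
    exact toReal_measure_lt_comp_eq_integral hhmeas hRmeas hindep
      ((measurable_id.div_const θ).pow_const α⁻¹)
  refine (tendsto_rpow_mul_integral_comp_div_rpow_inv hα₀ hFmono.measurable
    (fun _ => ENNReal.toReal_nonneg) hF0 hbound hFlim hhmeas hhnn hhint).congr' ?_
  filter_upwards [eventually_gt_atTop 0] with θ hθ
  rw [hprob θ hθ]
end
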